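/- Any GAV mapping set M can be transformed into a projection-only mapping set M' plus additional source TGDs Σ_M such that disclosure is preserved: introduce for each mapping rule φ_T(x,y) → T(x) a fresh source relation R_T, the source constraint φ_T(x,y) → R_T(x) together with R_T(x) → ∃y φ_T(x,y), and the projection map R_T(x) → T(x); then for every source constraint set Σ and Boolean policy q over the original source schema, q admits a disclosure w.r.t. (M, Σ) iff q admits a disclosure w.r.t. (M', Σ ∪ Σ_M). -/
import Mathlib


structure Atom (R V : Type) where
  rel : R
  args : List V

abbrev Inst (R α : Type) := Set (R × List α)

def satAtom {R V α : Type} (I : Inst R α) (h : V → α) (A : Atom R V) : Prop :=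
  (A.rel, A.args.map h) ∈ I

def satBody {R V α : Type} (I : Inst R α) (h : V → α) (φ : List (Atom R V)) : Prop :=
  ∀ A ∈ φ, satAtom I h A

structure GAVMapping (S G V : Type) where
  body : G → List (Atom S V)
  head : G → List V

def GAVMapping.image {S G V α : Type} (M : GAVMapping S G V) (D : Inst S α) : Inst G α :=
  {f | ∃ (T : G) (h : V → α), satBody D h (M.body T) ∧ f = (T, (M.head T).map h)}

/-- Restriction of an instance over the extended source schema `S ⊕ G`
(with one fresh source relation `R_T` per global relation `T`, encoded
as `Sum.inr T`) to the original source schema `S`. -/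
def restrictS {S G α : Type} (D' : Inst (S ⊕ G) α) : Inst S α :=
  {f | (Sum.inl f.1, f.2) ∈ D'}

/-- Satisfaction of the additional source constraints `Σ_M`: the two TGDs
`φ_T(x,y) → R_T(x)` and `R_T(x) → ∃y φ_T(x,y)` together say that the `R_T`
facts are exactly the image of the `S`-part of the instance under `M`. -/
def satSigmaM {S G V α : Type} (M : GAVMapping S G V) (D' : Inst (S ⊕ G) α) : Prop :=
  ∀ (T : G) (cs : List α),
    ((Sum.inr T, cs) ∈ D' ↔ (T, cs) ∈ M.image (restrictS D'))

/-- The image operator of the projection-only mapping set `M'`, consisting of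
the trivial projections `R_T(x) → T(x)`. -/
def projImage {S G α : Type} (D' : Inst (S ⊕ G) α) : Inst G α :=
  {f | (Sum.inr f.1, f.2) ∈ D'}

/-- `q` admits a disclosure w.r.t. an image operator and source constraints. -/
def admitsDisclosure {SrcI GlobI : Type} (img : SrcI → GlobI)
    (sat : SrcI → Prop) (q : SrcI → Prop) : Prop :=
  ∃ Vg, (∃ D, sat D ∧ img D = Vg) ∧ (∀ D, sat D → img D = Vg → q D)

def extendD {S G V α : Type} (M : GAVMapping S G V) (D : Inst S α) : Inst (S ⊕ G) α :=
  {f | (∃ R cs, f = (Sum.inl R, cs) ∧ (R, cs) ∈ D) ∨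
       (∃ T cs, f = (Sum.inr T, cs) ∧ (T, cs) ∈ M.image D)}

lemma restrict_extend {S G V α : Type} (M : GAVMapping S G V) (D : Inst S α) :
    restrictS (extendD M D) = D := by
  ext ⟨R, cs⟩
  simp only [restrictS, extendD, Set.mem_setOf_eq, Prod.mk.injEq, Sum.inl.injEq, reduceCtorEq, false_and, exists_const, or_false]
  aesop

lemma proj_extend {S G V α : Type} (M : GAVMapping S G V) (D : Inst S α) :
    projImage (extendD M D) = M.image D := by
  ext ⟨T, cs⟩
  simp only [projImage, extendD, Set.mem_setOf_eq, Prod.mk.injEq, Sum.inr.injEq, reduceCtorEq, false_and, exists_const, false_or]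
  aesop

lemma satSigmaM_extend {S G V α : Type} (M : GAVMapping S G V) (D : Inst S α) :
    satSigmaM M (extendD M D) := by
  intro T cs
  rw [restrict_extend]
  simp only [extendD, Set.mem_setOf_eq, Prod.mk.injEq, Sum.inr.injEq, reduceCtorEq, false_and, exists_const, false_or]
  aesop

lemma satSigmaM_proj {S G V α : Type} (M : GAVMapping S G V) (D' : Inst (S ⊕ G) α)
    (h : satSigmaM M D') : projImage D' = M.image (restrictS D') := by
  ext ⟨T, cs⟩
  exact h T cs

/-- replacing a GAV mapping set `M` by fresh source relations
`R_T` with source constraints `Σ_M` (`φ_T → R_T` and `R_T → ∃y φ_T`) and the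
projection-only mapping set `R_T(x) → T(x)` preserves disclosure: a Boolean
policy CQ `q` over the original source schema admits a disclosure w.r.t.
`(M, Σ)` iff it admits one w.r.t. `(M', Σ ∪ Σ_M)`. -/
theorem projection_normalization_preserves_disclosure {S G V α : Type}
    (M : GAVMapping S G V) (satSigma : Inst S α → Prop) (q : List (Atom S V)) :
    admitsDisclosure (M.image (α := α)) satSigma
        (fun D => ∃ h : V → α, satBody D h q)
      ↔
    admitsDisclosure (projImage (S := S) (G := G) (α := α))
        (fun D' => satSigma (restrictS D') ∧ satSigmaM M D')
        (fun D' => ∃ h : V → α, satBody (restrictS D') h q) := by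
  constructor
  · rintro ⟨Vg, ⟨D, hD, hDV⟩, huniv⟩
    refine ⟨Vg, ⟨extendD M D, ⟨?_, satSigmaM_extend M D⟩, ?_⟩, ?_⟩
    · rw [restrict_extend]; exact hD
    · rw [proj_extend]; exact hDV
    · rintro D' ⟨hsat, hsig⟩ hproj
      exact huniv (restrictS D') hsat (by rw [← satSigmaM_proj M D' hsig]; exact hproj)
  · rintro ⟨Vg, ⟨D', ⟨hsat, hsig⟩, hDV⟩, huniv⟩
    refine ⟨Vg, ⟨restrictS D', hsat, by rw [← satSigmaM_proj M D' hsig]; exact hDV⟩, ?_⟩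
    intro D hD hDVg
    have := huniv (extendD M D)
      ⟨by rw [restrict_extend]; exact hD, satSigmaM_extend M D⟩
      (by rw [proj_extend]; exact hDVg)
    simpa [restrict_extend M D] using this
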